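/- arXiv:2605.19460 — 3 statements merged into one kernel-verified Lean document; each statement's English description precedes it below -/
import Mathlib

section
/- Let p, q be coprime positive integers and F(X,Y) = C_p(X) − C_q(Y). At a point (X,Y) = (2cos(aπ/p), 2cos(bπ/q)) with 0 < a < p, 0 < b < q and a ≡ b (mod 2), the Hessian determinant of F equals −p²q²/(4 sin²(aπ/p) sin²(bπ/q)). -/
/-!
Since `C_n (2 cos θ) = 2 cos (n θ)`, differentiating in `θ` shows that `C_n'` vanishes at
`x = 2 cos (aπ/n)`, where `sin (n θ) = sin (aπ) = 0`. The differential equation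
`(4 - x²) C_n'' = x C_n' - n² C_n` then gives `C_n''(x) = -n² (-1)^a / (2 sin² (aπ/n))`,
and the signs `(-1)^a`, `(-1)^b` cancel because `a ≡ b (mod 2)`.
-/

open Real

/-- Normalized Chebyshev polynomials of the first kind. -/
noncomputable def Ccheb : ℕ → ℂ → ℂ
  | 0, _ => 2
  | 1, z => z
  | (n + 2), z => z * Ccheb (n + 1) z - Ccheb n z

open Polynomial Polynomial.Chebyshev

theorem deriv_deriv_polynomial_eval {𝕜 : Type*} [NontriviallyNormedField 𝕜] (P : 𝕜[X])
    (x : 𝕜) :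
    deriv (deriv fun z => P.eval z) x = (derivative (derivative P)).eval x := by
  have h : (deriv fun z => P.eval z) = fun z => (derivative P).eval z := funext fun z => P.deriv
  rw [h, Polynomial.deriv]

namespace Polynomial.Chebyshev

theorem four_sub_X_sq_mul_derivative_derivative_C_eq_poly_in_C {R : Type*} [CommRing R]
    [Invertible (2 : R)] (n : ℤ) :
    (4 - X ^ 2) * derivative (derivative (C R n)) =
      X * derivative (C R n) - (n ^ 2 : R[X]) * C R n := by
  set c : R[X] := Polynomial.C ⅟2
  have hc : 2 * c = 1 := by
    rw [← map_ofNat Polynomial.C 2, ← map_mul, mul_invOf_self', map_one]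
  have hT := congr_arg (·.comp (c * X))
    (one_sub_X_sq_mul_derivative_derivative_T_eq_poly_in_T (R := R) n)
  simp only [Function.iterate_succ, Function.iterate_zero, Function.comp_apply, Function.id_def,
    mul_comp, sub_comp, one_comp, pow_comp, X_comp, intCast_comp] at hT
  have hC := C_eq_two_mul_T_comp_half_mul_X (R := R) n
  have hC' : derivative (C R n) = 2 * c * (derivative (T R n)).comp (c * X) := by
    rw [hC]
    simp only [derivative_mul, derivative_comp, derivative_ofNat, derivative_C, derivative_X,
      zero_mul, mul_one, zero_add, c]
    ring
  have hC'' : derivative (derivative (C R n)) =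
      2 * c ^ 2 * (derivative (derivative (T R n))).comp (c * X) := by
    rw [hC']
    simp only [derivative_mul, derivative_comp, derivative_ofNat, derivative_C, derivative_X,
      zero_mul, mul_zero, mul_one, zero_add, add_zero, c]
    ring
  rw [hC'', hC', hC]
  -- the remainder is a multiple of `4 c² - 1`
  linear_combination
    2 * hT + 2 * (2 * c + 1) * (derivative (derivative (T R n))).comp (c * X) * hc

section Complex

variable (n : ℤ) {θ : ℂ}

theorem derivative_C_eval_two_mul_complex_cos_eq_zero (hθ : Complex.sin θ ≠ 0)
    (hnθ : Complex.sin (n * θ) = 0) :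
    (derivative (C ℂ n)).eval (2 * Complex.cos θ) = 0 := by
  have hcomp : HasDerivAt (fun θ => (C ℂ n).eval (2 * Complex.cos θ))
      ((derivative (C ℂ n)).eval (2 * Complex.cos θ) * (2 * -Complex.sin θ)) θ :=
    ((C ℂ n).hasDerivAt _).comp θ ((Complex.hasDerivAt_cos θ).const_mul 2)
  have hcos :
      HasDerivAt (fun θ => 2 * Complex.cos (n * θ)) (2 * (-Complex.sin (n * θ) * n)) θ := by
    simpa using
      ((Complex.hasDerivAt_cos _).comp θ ((hasDerivAt_id θ).const_mul (n : ℂ))).const_mul 2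
  simp only [C_two_mul_complex_cos] at hcomp
  simpa [hnθ, hθ] using hcomp.unique hcos

theorem derivative_derivative_C_eval_two_mul_complex_cos (hθ : Complex.sin θ ≠ 0)
    (hnθ : Complex.sin (n * θ) = 0) :
    (derivative (derivative (C ℂ n))).eval (2 * Complex.cos θ) =
      -(n ^ 2 * Complex.cos (n * θ)) / (2 * Complex.sin θ ^ 2) := by
  have hode := congr_arg (eval (2 * Complex.cos θ))
    (four_sub_X_sq_mul_derivative_derivative_C_eq_poly_in_C (R := ℂ) n)
  simp only [eval_mul, eval_sub, eval_pow, eval_X, eval_ofNat, eval_intCast,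
    derivative_C_eval_two_mul_complex_cos_eq_zero n hθ hnθ, C_two_mul_complex_cos] at hode
  field_simp
  linear_combination (1 / 2 : ℂ) * hode +
    2 * (derivative (derivative (C ℂ n))).eval (2 * Complex.cos θ) * Complex.sin_sq_add_cos_sq θ

end Complex

end Polynomial.Chebyshev

theorem Ccheb_eq_eval_C : ∀ n : ℕ, Ccheb n = fun z => (C ℂ n).eval z
  | 0 => by ext; simp [Ccheb]
  | 1 => by ext; simp [Ccheb]
  | n + 2 => by
    ext z
    rw [Ccheb, Ccheb_eq_eval_C (n + 1), Ccheb_eq_eval_C n]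
    push_cast
    simp [C_add_two]

theorem sin_nat_mul_pi_div_ne_zero {n a : ℕ} (ha : 0 < a) (han : a < n) :
    Real.sin (a * π / n) ≠ 0 := by
  have hn : (0 : ℝ) < n := by exact_mod_cast ha.trans han
  refine (Real.sin_pos_of_pos_of_lt_pi (by positivity) ?_).ne'
  rw [div_lt_iff₀ hn]
  have : (a : ℝ) < n := by exact_mod_cast han
  nlinarith [Real.pi_pos]

theorem deriv_deriv_Ccheb_two_mul_cos {n a : ℕ} (ha : 0 < a) (han : a < n) :
    deriv (deriv (Ccheb n)) ((2 * Real.cos (a * π / n) : ℝ) : ℂ)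
      = -((n : ℂ) ^ 2 * (-1) ^ a) / (2 * (Real.sin (a * π / n) : ℂ) ^ 2) := by
  have hnθ : ((n : ℤ) : ℂ) * ((a * π / n : ℝ) : ℂ) = ((a * π : ℝ) : ℂ) := by
    push_cast
    field_simp [show (n : ℂ) ≠ 0 by exact_mod_cast (ha.trans han).ne']
  have hsin : Complex.sin ((a * π / n : ℝ) : ℂ) ≠ 0 := by
    rw [← Complex.ofReal_sin]; exact_mod_cast sin_nat_mul_pi_div_ne_zero ha han
  have hsin_n : Complex.sin (((n : ℤ) : ℂ) * ((a * π / n : ℝ) : ℂ)) = 0 := by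
    rw [hnθ, ← Complex.ofReal_sin, Real.sin_nat_mul_pi, Complex.ofReal_zero]
  rw [Ccheb_eq_eval_C, deriv_deriv_polynomial_eval, Complex.ofReal_mul, Complex.ofReal_cos,
    Complex.ofReal_ofNat, derivative_derivative_C_eval_two_mul_complex_cos n hsin hsin_n, hnθ,
    ← Complex.ofReal_cos, ← Complex.ofReal_sin, Real.cos_nat_mul_pi]
  push_cast
  ring

-- `F_XX · F_YY - F_XY² = C_p''(X) · (-C_q''(Y))` for `F(X,Y) = C_p(X) - C_q(Y)`.
theorem chebyshev_curve_hessian_general (p q : ℕ) (a b : ℕ) (ha0 : 0 < a) (hap : a < p)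
    (hb0 : 0 < b) (hbq : b < q) (hparity : a % 2 = b % 2) :
    deriv (deriv (Ccheb p)) ((2 * Real.cos (a * π / p) : ℝ) : ℂ) *
      (-(deriv (deriv (Ccheb q)) ((2 * Real.cos (b * π / q) : ℝ) : ℂ)))
      = -((p : ℂ) ^ 2 * (q : ℂ) ^ 2) /
          (4 * (Real.sin (a * π / p) : ℂ) ^ 2 * (Real.sin (b * π / q) : ℂ) ^ 2) := by
  have hsign : (-1 : ℂ) ^ b = (-1) ^ a := by
    rw [neg_one_pow_eq_pow_mod_two, ← hparity, ← neg_one_pow_eq_pow_mod_two]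
  have hsq : ((-1 : ℂ) ^ a) ^ 2 = 1 := by rw [← pow_mul, mul_comm, pow_mul, neg_one_sq, one_pow]
  rw [deriv_deriv_Ccheb_two_mul_cos ha0 hap, deriv_deriv_Ccheb_two_mul_cos hb0 hbq, hsign]
  linear_combination (-((p : ℂ) ^ 2 * (q : ℂ) ^ 2) /
    (4 * (Real.sin (a * π / p) : ℂ) ^ 2 * (Real.sin (b * π / q) : ℂ) ^ 2)) * hsq

/-- The Hessian determinant of `F(X,Y) = C_p(X) - C_q(Y)`, namely
`F_XX · F_YY - F_XY² = C_p''(X) · (-C_q''(Y))`, at the singular points. -/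
theorem chebyshev_curve_hessian (p q : ℕ) (hp : 0 < p) (hq : 0 < q)
    (hpq : Nat.Coprime p q) (a b : ℕ) (ha0 : 0 < a) (hap : a < p)
    (hb0 : 0 < b) (hbq : b < q) (hparity : a % 2 = b % 2) :
    deriv (deriv (Ccheb p)) ((2 * Real.cos (a * π / p) : ℝ) : ℂ) *
      (-(deriv (deriv (Ccheb q)) ((2 * Real.cos (b * π / q) : ℝ) : ℂ)))
      = -((p : ℂ) ^ 2 * (q : ℂ) ^ 2) /
          (4 * (Real.sin (a * π / p) : ℂ) ^ 2 * (Real.sin (b * π / q) : ℂ) ^ 2) :=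
  chebyshev_curve_hessian_general p q a b ha0 hap hb0 hbq hparity
end

section
/- Let p, q be coprime positive integers with ps − qr = 1. The system C_q(t) = 2cos(aπ/p), C_p(t) = 2cos(bπ/q) with 0 < a < p, 0 < b < q, a ≡ b (mod 2), has solutions t = 2cos((ar/p + bs/q)π) and t = 2cos((ar/p − bs/q)π). -/
open Real

lemma Ccheb_two_cos (θ : ℝ) : ∀ n : ℕ,
    Ccheb n ((2 * Real.cos θ : ℝ) : ℂ) = ((2 * Real.cos (n * θ) : ℝ) : ℂ) := by
  intro n
  induction n using Nat.twoStepInduction with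
  | zero => simp [Ccheb]
  | one => simp [Ccheb]
  | more n ih2 ih1 =>
    have hrec : Ccheb (n + 2) ((2 * Real.cos θ : ℝ) : ℂ)
        = ((2 * Real.cos θ : ℝ) : ℂ) * Ccheb (n + 1) ((2 * Real.cos θ : ℝ) : ℂ)
          - Ccheb n ((2 * Real.cos θ : ℝ) : ℂ) := rfl
    rw [hrec, ih1, ih2]
    have key : 2 * Real.cos θ * (2 * Real.cos ((n + 1 : ℕ) * θ)) - 2 * Real.cos (n * θ)
        = 2 * Real.cos ((n + 2 : ℕ) * θ) := by
      have h1 : ((n + 2 : ℕ) : ℝ) * θ = ((n + 1 : ℕ) : ℝ) * θ + θ := by push_cast; ring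
      have h2 : (n : ℝ) * θ = ((n + 1 : ℕ) : ℝ) * θ - θ := by push_cast; ring
      rw [h1, h2, Real.cos_add, Real.cos_sub]
      ring
    exact_mod_cast congrArg (Complex.ofReal) key

theorem chebyshev_system_solutions (p q : ℕ) (hp : 0 < p) (hq : 0 < q)
    (r s : ℤ) (hrs : (p : ℤ) * s - (q : ℤ) * r = 1)
    (a b : ℕ) (ha0 : 0 < a) (hap : a < p) (hb0 : 0 < b) (hbq : b < q)
    (hparity : a % 2 = b % 2) :
    (Ccheb q ((2 * Real.cos ((a * r / p + b * s / q) * π) : ℝ) : ℂ)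
        = ((2 * Real.cos (a * π / p) : ℝ) : ℂ) ∧
      Ccheb p ((2 * Real.cos ((a * r / p + b * s / q) * π) : ℝ) : ℂ)
        = ((2 * Real.cos (b * π / q) : ℝ) : ℂ)) ∧
    (Ccheb q ((2 * Real.cos ((a * r / p - b * s / q) * π) : ℝ) : ℂ)
        = ((2 * Real.cos (a * π / p) : ℝ) : ℂ) ∧
      Ccheb p ((2 * Real.cos ((a * r / p - b * s / q) * π) : ℝ) : ℂ)
        = ((2 * Real.cos (b * π / q) : ℝ) : ℂ)) := by
  have hp' : (p : ℝ) ≠ 0 := Nat.cast_ne_zero.mpr hp.ne'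
  have hq' : (q : ℝ) ≠ 0 := Nat.cast_ne_zero.mpr hq.ne'
  have hqr : (q : ℝ) * r = (p : ℝ) * s - 1 := by
    have : (q : ℤ) * r = (p : ℤ) * s - 1 := by linarith
    exact_mod_cast this
  have hps : (p : ℝ) * s = (q : ℝ) * r + 1 := by linarith
  obtain ⟨m, hm⟩ : ∃ m : ℤ, (a : ℤ) + b = 2 * m := by
    refine ⟨((a : ℤ) + b) / 2, ?_⟩; omega
  obtain ⟨k, hk⟩ : ∃ k : ℤ, (a : ℤ) - b = 2 * k := by
    refine ⟨((a : ℤ) - b) / 2, ?_⟩; omega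
  have hm' : (a : ℝ) + b = 2 * m := by exact_mod_cast hm
  have hk' : (a : ℝ) - b = 2 * k := by exact_mod_cast hk
  refine ⟨⟨?_, ?_⟩, ?_, ?_⟩
  · rw [Ccheb_two_cos]
    rw [Complex.ofReal_inj]
    congr 1
    have e : (q : ℝ) * (((a : ℝ) * r / p + b * s / q) * π)
        = ((m * s : ℤ) : ℝ) * (2 * π) - a * π / p := by
      push_cast
      field_simp
      linear_combination ((p:ℝ) * s) * hm' + (a:ℝ) * hqr
    rw [e, Real.cos_int_mul_two_pi_sub]
  · rw [Ccheb_two_cos]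
    rw [Complex.ofReal_inj]
    congr 1
    have e : (p : ℝ) * (((a : ℝ) * r / p + b * s / q) * π)
        = (b : ℝ) * π / q + ((m * r : ℤ) : ℝ) * (2 * π) := by
      push_cast
      field_simp
      linear_combination ((r:ℝ) * q) * hm' + (b:ℝ) * hps
    rw [e, Real.cos_add_int_mul_two_pi]
  · rw [Ccheb_two_cos]
    rw [Complex.ofReal_inj]
    congr 1
    have e : (q : ℝ) * (((a : ℝ) * r / p - b * s / q) * π)
        = ((k * s : ℤ) : ℝ) * (2 * π) - a * π / p := by
      push_cast
      field_simp
      linear_combination ((p:ℝ) * s) * hk' + (a:ℝ) * hqr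
    rw [e, Real.cos_int_mul_two_pi_sub]
  · rw [Ccheb_two_cos]
    rw [Complex.ofReal_inj]
    congr 1
    have e : (p : ℝ) * (((a : ℝ) * r / p - b * s / q) * π)
        = ((k * r : ℤ) : ℝ) * (2 * π) - b * π / q := by
      push_cast
      field_simp
      linear_combination ((r:ℝ) * q) * hk' - (b:ℝ) * hps
    rw [e, Real.cos_int_mul_two_pi_sub]
end

section
/- Let p be a positive integer and a, c, e integers with 0 < a, c, e < p. Then (1/(2p)) Σ_{0<i<p} (sin(iaπ/p) sin(icπ/p) sin(ieπ/p)) / sin(iπ/p) equals 1/4 if a+c+e is odd and 2·max{a,c,e} < a+c+e < 2p (i.e., a,c,e satisfy the quantum triangle inequality at level p), and 0 if a+c+e is odd otherwise; if a+c+e is even the sum vanishes. -/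
open Real Finset

lemma cos_sum (p : ℕ) (hp : 0 < p) (m : ℤ) :
    ∑ i ∈ range p, Real.cos (m * i * π / p) =
      if (2 * (p:ℤ)) ∣ m then (p:ℝ) else if Even m then 0 else 1 := by
  have hp0 : (p:ℝ) ≠ 0 := Nat.cast_ne_zero.mpr hp.ne'
  by_cases hdvd : (2 * (p:ℤ)) ∣ m
  · obtain ⟨k, hk⟩ := hdvd
    rw [if_pos ⟨k, hk⟩]
    have h1 : ∀ i ∈ range p, Real.cos (m * i * π / p) = 1 := by
      intro i _
      have : (m:ℝ) * i * π / p = (k * i : ℤ) * (2 * π) := by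
        have : (m:ℝ) = 2 * p * k := by exact_mod_cast congrArg (Int.cast : ℤ → ℝ) hk
        field_simp [this]; push_cast; rw [this]; ring
      rw [this, Real.cos_int_mul_two_pi]
    rw [Finset.sum_congr rfl h1]
    simp
  · rw [if_neg hdvd]
    set θ : ℝ := m * π / p with hθ
    set z : ℂ := Complex.exp (θ * Complex.I) with hzdef
    have hzre : ∀ i : ℕ, (z ^ i).re = Real.cos (m * i * π / p) := by
      intro i
      rw [hzdef, ← Complex.exp_nat_mul]
      have : (i : ℂ) * (↑θ * Complex.I) = ((i * θ : ℝ) : ℂ) * Complex.I := by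
        push_cast; ring
      rw [this, Complex.exp_ofReal_mul_I_re]
      congr 1
      rw [hθ]; ring
    have hz1 : z ≠ 1 := by
      intro h
      rw [hzdef, Complex.exp_eq_one_iff] at h
      obtain ⟨n, hn⟩ := h
      have him : θ = n * (2 * π) := by
        have := congrArg Complex.im hn
        simpa using this
      have hpi : π ≠ 0 := Real.pi_ne_zero
      have : (m : ℝ) = 2 * p * n := by
        rw [hθ] at him
        field_simp at him
        have hpi' : (0:ℝ) < π := Real.pi_pos
        nlinarith [him]
      have : m = 2 * (p:ℤ) * n := by exact_mod_cast this
      exact hdvd ⟨n, this⟩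
    have hzp : z ^ p = (-1 : ℂ) ^ m := by
      rw [hzdef, ← Complex.exp_nat_mul]
      have : (p:ℂ) * (↑θ * Complex.I) = (m : ℂ) * (↑π * Complex.I) := by
        rw [hθ]
        push_cast
        have : (p:ℂ) ≠ 0 := Nat.cast_ne_zero.mpr hp.ne'
        field_simp
      rw [this, Complex.exp_int_mul, Complex.exp_pi_mul_I]
    have hsum : ∑ i ∈ range p, Real.cos (m * i * π / p) = (∑ i ∈ range p, z ^ i).re := by
      rw [Complex.re_sum]
      exact (Finset.sum_congr rfl fun i _ => (hzre i).symm)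
    rw [hsum, geom_sum_eq hz1, hzp]
    rcases Int.even_or_odd m with hev | hod
    · rw [if_pos hev, hev.neg_one_zpow]
      simp
    · rw [if_neg (by simpa using hod)]
      rw [hod.neg_one_zpow]
      have hre : z.re = Real.cos θ := by rw [hzdef]; exact Complex.exp_ofReal_mul_I_re θ
      have him : z.im = Real.sin θ := by
        rw [hzdef]; simpa using Complex.exp_ofReal_mul_I_im θ
      have hcos : Real.cos θ ≠ 1 := by
        intro h
        apply hz1
        have hs : Real.sin θ = 0 := by
          have := Real.sin_sq_add_cos_sq θ
          nlinarith
        apply Complex.ext <;> simp [hre, him, h, hs]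
      have hnsq : Complex.normSq (z - 1) = 2 - 2 * Real.cos θ := by
        rw [Complex.normSq_apply]
        simp [Complex.sub_re, Complex.sub_im, hre, him]
        nlinarith [Real.sin_sq_add_cos_sq θ]
      rw [show (-1 - 1 : ℂ) = -2 by ring, Complex.div_re, hnsq]
      rw [Complex.sub_re, Complex.sub_im, hre, him]
      have h2 : (2:ℝ) - 2 * Real.cos θ ≠ 0 := by
        have := sub_ne_zero.mpr hcos
        intro h; apply this; linarith
      rw [show ((-2:ℂ)).re = -2 by norm_num, show ((-2:ℂ)).im = 0 by norm_num,
        Complex.one_re, Complex.one_im]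
      field_simp
      ring


lemma sin_mul_sin (x y : ℝ) :
    Real.sin x * Real.sin y = (Real.cos (x - y) - Real.cos (x + y)) / 2 := by
  rw [Real.cos_sub_cos, show (x - y + (x + y))/2 = x by ring,
    show (x - y - (x + y))/2 = -y by ring, Real.sin_neg]
  ring

lemma sin_orth (p : ℕ) (hp : 0 < p) (a b : ℤ) :
    ∑ i ∈ range p, Real.sin (a * i * π / p) * Real.sin (b * i * π / p)
      = ((if (2*(p:ℤ)) ∣ (a-b) then (p:ℝ) else if Even (a-b) then 0 else 1)
        - (if (2*(p:ℤ)) ∣ (a+b) then (p:ℝ) else if Even (a+b) then 0 else 1))/2 := by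
  have key : ∀ i ∈ range p, Real.sin (a * i * π / p) * Real.sin (b * i * π / p)
      = (Real.cos (((a-b : ℤ):ℝ) * i * π / p) - Real.cos (((a+b : ℤ):ℝ) * i * π / p)) / 2 := by
    intro i _
    have e1 : (a:ℝ) * i * π / p - (b:ℝ) * i * π / p = ((a-b : ℤ):ℝ) * i * π / p := by
      push_cast; ring
    have e2 : (a:ℝ) * i * π / p + (b:ℝ) * i * π / p = ((a+b : ℤ):ℝ) * i * π / p := by
      push_cast; ring
    rw [sin_mul_sin, e1, e2]
  rw [Finset.sum_congr rfl key, ← Finset.sum_div, Finset.sum_sub_distrib,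
    cos_sum p hp (a-b), cos_sum p hp (a+b)]

lemma sin_expand (c : ℤ) (e : ℕ) (θ : ℝ) :
    Real.sin (c*θ) * Real.sin ((e:ℝ)*θ) =
      Real.sin θ * ∑ k ∈ range e, Real.sin (((c + e - 1 - 2*k : ℤ) : ℝ) * θ) := by
  set f : ℕ → ℝ := fun k => Real.cos (((c + e - 2*k : ℤ) : ℝ) * θ) with hf
  rw [Finset.mul_sum]
  have key : ∀ k ∈ range e, Real.sin θ * Real.sin (((c + e - 1 - 2*k : ℤ) : ℝ) * θ)
      = (f (k+1) - f k) / 2 := by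
    intro k _
    rw [mul_comm, sin_mul_sin]
    have h1 : Real.cos (((c + e - 1 - 2*k : ℤ) : ℝ) * θ - θ) = f (k+1) := by
      simp only [hf]; congr 1; push_cast; ring
    have h2 : Real.cos (((c + e - 1 - 2*k : ℤ) : ℝ) * θ + θ) = f k := by
      simp only [hf]; congr 1; push_cast; ring
    rw [h1, h2]
  rw [Finset.sum_congr rfl key, ← Finset.sum_div, Finset.sum_range_sub f e]
  have hfe : f e = Real.cos (((c - e : ℤ) : ℝ) * θ) := by
    simp only [hf]; congr 1; push_cast; ring
  have hf0 : f 0 = Real.cos (((c + e : ℤ) : ℝ) * θ) := by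
    simp only [hf]; congr 1; push_cast; ring
  rw [hfe, hf0, sin_mul_sin]
  congr 2 <;> (congr 1 <;> push_cast <;> ring)


lemma int_dvd_bound {n x : ℤ} (hn : 0 < n) (h : n ∣ x) (h1 : -n < x) (h2 : x < 2*n) :
    x = 0 ∨ x = n := by
  obtain ⟨t, rfl⟩ := h
  have ht : t = 0 ∨ t = 1 := by
    by_contra hc
    push_neg at hc
    rcases lt_or_ge t 0 with h' | h'
    · have : n * t ≤ n * (-1) := mul_le_mul_of_nonneg_left (by omega) hn.le
      omega
    · have : n * 2 ≤ n * t := mul_le_mul_of_nonneg_left (by omega) hn.le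
      omega
  rcases ht with rfl | rfl
  · left; ring
  · right; ring

lemma count_lemma (e : ℕ) (t : ℤ) (x : ℝ) :
    ∑ k ∈ range e, (if 2*(k:ℤ) = t then x else 0)
      = if (0 ≤ t ∧ t < 2*(e:ℤ) ∧ 2 ∣ t) then x else 0 := by
  by_cases h : 0 ≤ t ∧ t < 2*(e:ℤ) ∧ 2 ∣ t
  · rw [if_pos h]
    obtain ⟨h0, h1, h2⟩ := h
    set k₀ : ℕ := t.toNat / 2 with hk₀
    have hcong : ∀ k ∈ range e, (if 2*(k:ℤ) = t then x else 0) = (if k = k₀ then x else 0) := by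
      intro k _
      have : (2*(k:ℤ) = t) ↔ (k = k₀) := by omega
      rw [if_congr this rfl rfl]
    rw [Finset.sum_congr rfl hcong, Finset.sum_ite_eq' (range e) k₀ (fun _ => x),
      if_pos (Finset.mem_range.mpr (by omega))]
  · rw [if_neg h]
    apply Finset.sum_eq_zero
    intro k hk
    rw [if_neg]
    intro heq
    have := Finset.mem_range.mp hk
    exact h ⟨by omega, by omega, by omega⟩

lemma sum_Ioo_eq_range (p : ℕ) (hp : 0 < p) (f : ℕ → ℝ) (h0 : f 0 = 0) :
    ∑ i ∈ Ioo 0 p, f i = ∑ i ∈ range p, f i := by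
  rw [Finset.range_eq_Ico, ← Finset.sum_Ico_consecutive f (Nat.zero_le 1) hp,
    ← Finset.Ico_add_one_left_eq_Ioo]
  simp [h0]


theorem fusion_coefficient (p : ℕ) (hp : 0 < p) (a c e : ℕ)
    (ha0 : 0 < a) (hap : a < p) (hc0 : 0 < c) (hcp : c < p)
    (he0 : 0 < e) (hep : e < p) :
    (1 / (2 * (p : ℝ))) *
        ∑ i ∈ Ioo 0 p,
          Real.sin (i * a * π / p) * Real.sin (i * c * π / p) *
            Real.sin (i * e * π / p) / Real.sin (i * π / p)
      = if Odd (a + c + e) ∧ 2 * max a (max c e) < a + c + e ∧ a + c + e < 2 * p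
        then 1 / 4 else 0 := by
  have hp0 : (p:ℝ) ≠ 0 := Nat.cast_ne_zero.mpr hp.ne'
  -- Step 1: rewrite each term using sin_expand
  have main1 : ∀ i ∈ Ioo 0 p,
      Real.sin (i * a * π / p) * Real.sin (i * c * π / p) *
        Real.sin (i * e * π / p) / Real.sin (i * π / p)
      = ∑ k ∈ range e, Real.sin (((a:ℤ):ℝ) * i * π / p) *
          Real.sin ((((c:ℤ) + e - 1 - 2*k : ℤ):ℝ) * i * π / p) := by
    intro i hi
    obtain ⟨hi0, hip⟩ := Finset.mem_Ioo.mp hi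
    set θ : ℝ := (i:ℝ) * π / p with hθ
    have hs : Real.sin θ ≠ 0 := by
      apply ne_of_gt
      apply Real.sin_pos_of_pos_of_lt_pi
      · rw [hθ]
        have : (0:ℝ) < (i:ℝ) := by exact_mod_cast hi0
        positivity
      · rw [hθ, div_lt_iff₀ (by exact_mod_cast hp)]
        have : (i:ℝ) < (p:ℝ) := by exact_mod_cast hip
        nlinarith [Real.pi_pos]
    have hce : Real.sin ((i:ℝ) * c * π / p) * Real.sin ((i:ℝ) * e * π / p)
        = Real.sin θ * ∑ k ∈ range e, Real.sin ((((c:ℤ) + e - 1 - 2*k : ℤ):ℝ) * θ) := by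
      rw [← sin_expand (c:ℤ) e θ]
      congr 1 <;> (congr 1; rw [hθ]; push_cast; ring)
    have hae : Real.sin ((i:ℝ) * a * π / p) = Real.sin (((a:ℤ):ℝ) * i * π / p) := by
      congr 1; push_cast; ring
    rw [mul_assoc, hce, hae]
    rw [mul_comm (Real.sin θ) _, ← mul_assoc, mul_div_assoc,
      mul_div_assoc, div_self hs, mul_one]
    rw [Finset.mul_sum]
    apply Finset.sum_congr rfl
    intro k _
    congr 2
    rw [hθ]; ring
  rw [Finset.sum_congr rfl main1, Finset.sum_comm]
  -- Step 2: apply orthogonality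
  have main2 : ∀ k ∈ range e,
      (∑ i ∈ Ioo 0 p, Real.sin (((a:ℤ):ℝ) * i * π / p) *
          Real.sin ((((c:ℤ) + e - 1 - 2*k : ℤ):ℝ) * i * π / p))
      = ((if (2*(p:ℤ)) ∣ ((a:ℤ)-((c:ℤ) + e - 1 - 2*k)) then (p:ℝ)
            else if Even ((a:ℤ)-((c:ℤ) + e - 1 - 2*k)) then 0 else 1)
        - (if (2*(p:ℤ)) ∣ ((a:ℤ)+((c:ℤ) + e - 1 - 2*k)) then (p:ℝ)
            else if Even ((a:ℤ)+((c:ℤ) + e - 1 - 2*k)) then 0 else 1))/2 := by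
    intro k _
    rw [sum_Ioo_eq_range p hp _ (by simp)]
    exact sin_orth p hp (a:ℤ) ((c:ℤ) + e - 1 - 2*k)
  rw [Finset.sum_congr rfl main2]
  rcases Nat.even_or_odd (a + c + e) with hev | hod
  · -- even case: everything vanishes
    obtain ⟨t, ht⟩ := hev
    rw [if_neg (by rintro ⟨hodd, -⟩; exact (Nat.not_odd_iff_even.mpr ⟨t, ht⟩) hodd)]
    rw [Finset.sum_eq_zero, mul_zero]
    intro k hk
    have hodd1 : ¬ Even ((a:ℤ)-((c:ℤ) + e - 1 - 2*k)) := by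
      rw [Int.even_iff]; omega
    have hodd2 : ¬ Even ((a:ℤ)+((c:ℤ) + e - 1 - 2*k)) := by
      rw [Int.even_iff]; omega
    have hd1 : ¬ (2*(p:ℤ)) ∣ ((a:ℤ)-((c:ℤ) + e - 1 - 2*k)) := by
      intro hd
      exact hodd1 (Int.even_iff.mpr (by
        have : (2:ℤ) ∣ ((a:ℤ)-((c:ℤ) + e - 1 - 2*k)) := dvd_trans ⟨(p:ℤ), by ring⟩ hd
        omega))
    have hd2 : ¬ (2*(p:ℤ)) ∣ ((a:ℤ)+((c:ℤ) + e - 1 - 2*k)) := by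
      intro hd
      exact hodd2 (Int.even_iff.mpr (by
        have : (2:ℤ) ∣ ((a:ℤ)+((c:ℤ) + e - 1 - 2*k)) := dvd_trans ⟨(p:ℤ), by ring⟩ hd
        omega))
    rw [if_neg hd1, if_neg hd2, if_neg hodd1, if_neg hodd2]
    norm_num
  · -- odd case
    obtain ⟨t, ht⟩ := hod
    have hVk : ∀ k ∈ range e,
        ((if (2*(p:ℤ)) ∣ ((a:ℤ)-((c:ℤ) + e - 1 - 2*k)) then (p:ℝ)
            else if Even ((a:ℤ)-((c:ℤ) + e - 1 - 2*k)) then 0 else 1)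
        - (if (2*(p:ℤ)) ∣ ((a:ℤ)+((c:ℤ) + e - 1 - 2*k)) then (p:ℝ)
            else if Even ((a:ℤ)+((c:ℤ) + e - 1 - 2*k)) then 0 else 1))/2
        = ((if 2*(k:ℤ) = (c:ℤ)+e-1-a then (p:ℝ) else 0)
          - ((if 2*(k:ℤ) = (a:ℤ)+c+e-1 then (p:ℝ) else 0)
            + (if 2*(k:ℤ) = (a:ℤ)+c+e-1-2*p then (p:ℝ) else 0)))/2 := by
      intro k hk
      have hke := Finset.mem_range.mp hk
      have hiff1 : (2*(p:ℤ)) ∣ ((a:ℤ)-((c:ℤ) + e - 1 - 2*k)) ↔ 2*(k:ℤ) = (c:ℤ)+e-1-a := by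
        constructor
        · intro hd
          have := Int.eq_zero_of_abs_lt_dvd hd (abs_lt.mpr ⟨by omega, by omega⟩)
          omega
        · intro heq
          have : (a:ℤ)-((c:ℤ) + e - 1 - 2*k) = 0 := by omega
          rw [this]
          exact dvd_zero _
      have heven1 : Even ((a:ℤ)-((c:ℤ) + e - 1 - 2*k)) := by
        rw [Int.even_iff]; omega
      have heven2 : Even ((a:ℤ)+((c:ℤ) + e - 1 - 2*k)) := by
        rw [Int.even_iff]; omega
      have hiff2 : (2*(p:ℤ)) ∣ ((a:ℤ)+((c:ℤ) + e - 1 - 2*k)) ↔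
          (2*(k:ℤ) = (a:ℤ)+c+e-1 ∨ 2*(k:ℤ) = (a:ℤ)+c+e-1-2*p) := by
        constructor
        · intro hd
          have := int_dvd_bound (by positivity) hd (by omega) (by omega)
          omega
        · intro heq
          rcases heq with h1 | h1
          · have : (a:ℤ)+((c:ℤ) + e - 1 - 2*k) = 0 := by omega
            rw [this]; exact dvd_zero _
          · have : (a:ℤ)+((c:ℤ) + e - 1 - 2*k) = 2*(p:ℤ) := by omega
            rw [this]
      congr 1
      congr 1
      · by_cases h : 2*(k:ℤ) = (c:ℤ)+e-1-a
        · rw [if_pos (hiff1.mpr h), if_pos h]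
        · rw [if_neg (fun hd => h (hiff1.mp hd)), if_neg h, if_pos heven1]
      · by_cases h1 : 2*(k:ℤ) = (a:ℤ)+c+e-1
        · have h2 : ¬ (2*(k:ℤ) = (a:ℤ)+c+e-1-2*p) := by omega
          rw [if_pos (hiff2.mpr (Or.inl h1)), if_pos h1, if_neg h2, add_zero]
        · by_cases h2 : 2*(k:ℤ) = (a:ℤ)+c+e-1-2*p
          · rw [if_pos (hiff2.mpr (Or.inr h2)), if_neg h1, if_pos h2, zero_add]
          · rw [if_neg (fun hd => by rcases hiff2.mp hd with h|h; exact h1 h; exact h2 h),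
              if_pos heven2, if_neg h1, if_neg h2, add_zero]
    rw [Finset.sum_congr rfl hVk, ← Finset.sum_div, Finset.sum_sub_distrib,
      Finset.sum_add_distrib, count_lemma, count_lemma, count_lemma]
    -- final arithmetic
    have hcond : (if Odd (a + c + e) ∧ 2 * max a (max c e) < a + c + e ∧ a + c + e < 2 * p
        then (1/4 : ℝ) else 0)
        = (if 2 * max a (max c e) < a + c + e ∧ a + c + e < 2 * p then (1/4 : ℝ) else 0) := by
      rw [if_congr (and_iff_right ⟨t, by omega⟩) rfl rfl]
    rw [hcond]
    split_ifs with h1 h2 h3 hR h2 h3 hR h3 hR hR h2 h3 hR h2 h3 hR h3 hR hR <;>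
      first
        | (exfalso; omega)
        | (field_simp; ring)
        | norm_num
end
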